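/- (Non-degeneracy of the linear frequencies, Lemma 5.2.) (i) For every c = (c₁,…,c_N) ∈ ℝ^N \ {0}, the function γ ↦ c₁Ω_{n₁}(γ) + … + c_N Ω_{n_N}(γ) is not identically zero on [γ₁,γ₂]. (ii) For every (c₀,c₁,…,c_N) ∈ ℝ^{N+1} \ {0}, the function γ ↦ c₀ + c₁Ω_{n₁}(γ) + … + c_N Ω_{n_N}(γ) is not identically zero on [γ₁,γ₂]. -/

import Mathlib

open Real

/-- `Ω_γ := γ/(1+γ)²`. -/
noncomputable def OmG (γ : ℝ) : ℝ := γ / (1 + γ) ^ 2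

/-- `κ_n(γ) := ((γ−1)/(γ+1))ⁿ`. -/
noncomputable def kap (n : ℕ) (γ : ℝ) : ℝ := ((γ - 1) / (γ + 1)) ^ n

/-- `μ_n^+(γ) := nΩ_γ − 1/2 + κ_n(γ)/2`. -/
noncomputable def muP (n : ℕ) (γ : ℝ) : ℝ := n * OmG γ - 1 / 2 + kap n γ / 2

/-- `μ_n^-(γ) := nΩ_γ − 1/2 − κ_n(γ)/2`. -/
noncomputable def muM (n : ℕ) (γ : ℝ) : ℝ := n * OmG γ - 1 / 2 - kap n γ / 2

/-- `Ω_n(γ) := √(μ_n^+(γ) μ_n^-(γ))`. -/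
noncomputable def Om (n : ℕ) (γ : ℝ) : ℝ := Real.sqrt (muP n γ * muM n γ)

/-!
Where `μ_n^+ μ_n^- > 0` each `Ω_n` is real-analytic; this holds on `[1, γ₂]`, so a linear relation
on `[γ₁, γ₂]` persists on a neighbourhood of `γ = 1`, where every `κ_n` vanishes. With
`A_n := nΩ_γ − 1/2 = (μ_n^+ + μ_n^-)/2` one has `Ω_n² = A_n² − κ_n²/4`, hence
`Ω_n − A_n = −κ_n² / (4 (Ω_n + A_n))` vanishes at `γ = 1` to order exactly `2n`, while
`Ω_γ − 1/4 = −κ_1²/4` vanishes to order `2` and `Ω_1 = Ω_γ`. Near `γ = 1` the relation is therefore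
a combination of `1`, `Ω_γ − 1/4` and the `Ω_{n_i} − A_{n_i}` with `n_i ≥ 3`, functions vanishing to
pairwise distinct orders `0, 2, 2n_i`; dividing by the lowest order present shows all coefficients
vanish, and `c₀` and the `c_i` are read off from them.
-/

open Filter Topology Set

theorem analyticAt_sqrt {x : ℝ} (hx : 0 < x) : AnalyticAt ℝ Real.sqrt x := by
  have h : AnalyticAt ℝ (fun y => Real.exp (Real.log y * (1 / 2))) x := by
    fun_prop (disch := assumption)
  refine h.congr ?_
  filter_upwards [eventually_gt_nhds hx] with y hy
  rw [Real.sqrt_eq_rpow, Real.rpow_def_of_pos hy]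

theorem eventually_eq_zero_of_eqOn_Icc {f : ℝ → ℝ} {a b c : ℝ} (hf : AnalyticOnNhd ℝ f (Ico a b))
    (hac : a ≤ c) (hcb : c < b) (h0 : EqOn f 0 (Icc c b)) : ∀ᶠ x in 𝓝 a, f x = 0 := by
  obtain ⟨l, hla, hl⟩ := exists_Ioc_subset_of_mem_nhds
    ((isOpen_analyticAt ℝ f).mem_nhds (hf a ⟨le_rfl, hac.trans_lt hcb⟩)) ⟨a - 1, by linarith⟩
  have hU : AnalyticOnNhd ℝ f (Ioo l b) := fun x hx =>
    (le_or_gt x a).elim (fun hxa => hl ⟨hx.1, hxa⟩) (fun hxa => hf x ⟨hxa.le, hx.2⟩)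
  have hright : ∀ᶠ x in 𝓝[>] c, f x = 0 :=
    eventually_of_mem (Ioo_mem_nhdsGT hcb) fun x hx => h0 ⟨hx.1.le, hx.2.le⟩
  have hfreq : ∃ᶠ x in 𝓝[≠] c, f x = 0 :=
    hright.frequently.filter_mono (nhdsWithin_mono c fun x hx => ne_of_gt hx)
  filter_upwards [Ioo_mem_nhds hla (hac.trans_lt hcb)] with x hx
  exact hU.eqOn_zero_of_preconnected_of_frequently_eq_zero isPreconnected_Ioo
    ⟨hla.trans_le hac, hcb⟩ hfreq hx

theorem eq_zero_of_sum_mul_pow_sub_mul_eq_zero {ι : Type*} [Fintype ι] {a : ℝ} {e : ι → ℕ}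
    (he : Function.Injective e) {g : ι → ℝ → ℝ} (hg : ∀ i, ContinuousAt (g i) a)
    (hga : ∀ i, g i a ≠ 0) {c : ι → ℝ}
    (h : ∀ᶠ x in 𝓝[≠] a, ∑ i, c i * ((x - a) ^ e i * g i x) = 0) : c = 0 := by
  classical
  by_contra hc
  obtain ⟨i, hci, hmin⟩ : ∃ i, c i ≠ 0 ∧ ∀ j, c j ≠ 0 → e i ≤ e j := by
    obtain ⟨j, hj⟩ := Function.ne_iff.1 hc
    obtain ⟨i, hi, hmin⟩ :=
      (Finset.univ.filter (c · ≠ 0)).exists_min_image e ⟨j, by simpa using hj⟩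
    exact ⟨i, (Finset.mem_filter.1 hi).2, fun j hj => hmin j (by simpa using hj)⟩
  -- divide by the lowest power `(x - a) ^ e i` that occurs
  set q : ℝ → ℝ := fun x => ∑ j, c j * ((x - a) ^ (e j - e i) * g j x)
  have hfactor : ∀ x, ∑ j, c j * ((x - a) ^ e j * g j x) = (x - a) ^ e i * q x := by
    intro x
    rw [Finset.mul_sum]
    refine Finset.sum_congr rfl fun j _ => ?_
    by_cases hcj : c j = 0
    · simp [hcj]
    · rw [← Nat.add_sub_cancel' (hmin j hcj), pow_add, Nat.add_sub_cancel_left]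
      ring
  have hq : ∀ᶠ x in 𝓝[≠] a, q x = 0 := by
    filter_upwards [h, self_mem_nhdsWithin] with x hx hxa
    rw [hfactor] at hx
    exact (mul_eq_zero.1 hx).resolve_left (pow_ne_zero _ (sub_ne_zero.2 hxa))
  have hqa : q a = 0 :=
    tendsto_nhds_unique ((show ContinuousAt q a by fun_prop).tendsto.mono_left nhdsWithin_le_nhds)
      (tendsto_const_nhds.congr' (hq.mono fun x hx => hx.symm))
  have hqa' : q a = c i * g i a := by
    refine (Finset.sum_eq_single i (fun j _ hji => ?_) (by simp)).trans (by simp)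
    by_cases hcj : c j = 0
    · simp [hcj]
    · have : e i < e j := (hmin j hcj).lt_of_ne (he.ne hji).symm
      simp [Nat.sub_ne_zero_of_lt this]
  exact mul_ne_zero hci (hga i) (hqa' ▸ hqa)

/-- The arithmetic mean `A_n = (μ_n^+ + μ_n^-)/2`. -/
noncomputable def muAvg (n : ℕ) (γ : ℝ) : ℝ := n * OmG γ - 1 / 2

noncomputable def gapFactor (n : ℕ) (γ : ℝ) : ℝ := -(γ + 1)⁻¹ ^ (2 * n) / (4 * (Om n γ + muAvg n γ))

theorem OmG_at_one : OmG 1 = 1 / 4 := by norm_num [OmG]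

theorem OmG_pos {γ : ℝ} (hγ : 0 < γ) : 0 < OmG γ := by unfold OmG; positivity

theorem kap_at_one {n : ℕ} (hn : n ≠ 0) : kap n 1 = 0 := by simp [kap, hn]

theorem kap_nonneg (n : ℕ) {γ : ℝ} (hγ : 1 ≤ γ) : 0 ≤ kap n γ := by
  unfold kap; exact pow_nonneg (div_nonneg (by linarith) (by linarith)) n

theorem kap_sq (n : ℕ) (γ : ℝ) : kap n γ ^ 2 = (γ - 1) ^ (2 * n) * (γ + 1)⁻¹ ^ (2 * n) := by
  rw [kap, ← pow_mul, mul_comm n 2, div_eq_mul_inv, mul_pow]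

theorem kap_one_sq {γ : ℝ} (hγ : γ + 1 ≠ 0) : kap 1 γ ^ 2 = 1 - 4 * OmG γ := by
  have : 1 + γ ≠ 0 := by rwa [add_comm]
  simp only [kap, OmG, pow_one]
  field_simp
  ring

theorem OmG_sub_quarter {γ : ℝ} (hγ : γ + 1 ≠ 0) :
    OmG γ - 1 / 4 = (γ - 1) ^ 2 * (-(γ + 1)⁻¹ ^ 2 / 4) := by
  linear_combination (1 / 4) * ((kap_sq 1 γ).symm.trans (kap_one_sq hγ))

theorem muP_mul_muM (n : ℕ) (γ : ℝ) : muP n γ * muM n γ = muAvg n γ ^ 2 - kap n γ ^ 2 / 4 := by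
  simp only [muP, muM, muAvg]; ring

theorem muP_one_mul_muM_one {γ : ℝ} (hγ : γ + 1 ≠ 0) : muP 1 γ * muM 1 γ = OmG γ ^ 2 := by
  rw [muP_mul_muM, kap_one_sq hγ, muAvg]; push_cast; ring

theorem Om_one {γ : ℝ} (hγ : 0 ≤ γ) : Om 1 γ = OmG γ := by
  have : 0 ≤ OmG γ := by unfold OmG; positivity
  rw [Om, muP_one_mul_muM_one (by linarith), Real.sqrt_sq this]

theorem muAvg_at_one (n : ℕ) : muAvg n 1 = n / 4 - 1 / 2 := by rw [muAvg, OmG_at_one]; ring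

theorem Om_at_one {n : ℕ} (hn : 2 ≤ n) : Om n 1 = n / 4 - 1 / 2 := by
  have : (2 : ℝ) ≤ n := by exact_mod_cast hn
  rw [Om, muP_mul_muM, kap_at_one (by omega), muAvg_at_one]
  simpa using Real.sqrt_sq (by linarith : (0 : ℝ) ≤ n / 4 - 1 / 2)

theorem Om_sub_muAvg {n : ℕ} {γ : ℝ} (hprod : 0 ≤ muP n γ * muM n γ)
    (hsum : Om n γ + muAvg n γ ≠ 0) : Om n γ - muAvg n γ = (γ - 1) ^ (2 * n) * gapFactor n γ := by
  have hsq : Om n γ ^ 2 = muAvg n γ ^ 2 - kap n γ ^ 2 / 4 := by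
    rw [Om, Real.sq_sqrt hprod, muP_mul_muM]
  rw [gapFactor, mul_div_assoc', eq_div_iff (mul_ne_zero four_ne_zero hsum)]
  linear_combination 4 * hsq - kap_sq n γ

theorem OmG_antitoneOn : AntitoneOn OmG (Ici 1) := by
  intro a ha b _ hab
  simp only [mem_Ici] at ha
  unfold OmG
  rw [div_le_div_iff₀ (pow_pos (by linarith) 2) (pow_pos (by linarith) 2)]
  nlinarith [mul_nonneg (sub_nonneg.2 hab) (show (0 : ℝ) ≤ a * b - 1 by nlinarith)]

theorem kap_monotoneOn (n : ℕ) : MonotoneOn (kap n) (Ici 1) := by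
  intro a ha b _ hab
  simp only [mem_Ici] at ha
  unfold kap
  refine pow_le_pow_left₀ (div_nonneg (by linarith) (by linarith)) ?_ n
  rw [div_le_div_iff₀ (by linarith) (by linarith)]
  nlinarith

theorem muM_antitoneOn (n : ℕ) : AntitoneOn (muM n) (Ici 1) := by
  intro a ha b hb hab
  have := OmG_antitoneOn ha hb hab
  have := kap_monotoneOn n ha hb hab
  simp only [muM]
  nlinarith [(Nat.cast_nonneg n : (0 : ℝ) ≤ n)]

theorem muP_mul_muM_pos {n : ℕ} {γ : ℝ} (hγ : 1 ≤ γ) (h : 0 < muM n γ) :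
    0 < muP n γ * muM n γ := by
  have : muP n γ = muM n γ + kap n γ := by simp only [muP, muM]; ring
  have := kap_nonneg n hγ
  exact mul_pos (by linarith) h

theorem analyticAt_muP_mul_muM (n : ℕ) {γ : ℝ} (hγ : γ + 1 ≠ 0) :
    AnalyticAt ℝ (fun γ => muP n γ * muM n γ) γ := by
  have : (1 + γ) ^ 2 ≠ 0 := pow_ne_zero 2 (by rwa [add_comm])
  unfold muP muM kap OmG
  fun_prop (disch := assumption)

theorem analyticAt_Om (n : ℕ) {γ : ℝ} (hγ : γ + 1 ≠ 0) (hpos : 0 < muP n γ * muM n γ) :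
    AnalyticAt ℝ (Om n) γ :=
  (analyticAt_sqrt hpos).comp (f := fun γ => muP n γ * muM n γ) (analyticAt_muP_mul_muM n hγ)

theorem continuousAt_Om (n : ℕ) {γ : ℝ} (hγ : γ + 1 ≠ 0) : ContinuousAt (Om n) γ :=
  Real.continuous_sqrt.continuousAt.comp (analyticAt_muP_mul_muM n hγ).continuousAt

theorem continuousAt_muAvg (n : ℕ) {γ : ℝ} (hγ : γ + 1 ≠ 0) : ContinuousAt (muAvg n) γ := by
  have : (1 + γ) ^ 2 ≠ 0 := pow_ne_zero 2 (by rwa [add_comm])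
  unfold muAvg OmG
  fun_prop (disch := assumption)

theorem Om_add_muAvg_at_one {n : ℕ} (hn : 3 ≤ n) : 0 < Om n 1 + muAvg n 1 := by
  have : (3 : ℝ) ≤ n := by exact_mod_cast hn
  rw [Om_at_one (by omega), muAvg_at_one]
  linarith

theorem eventually_pos_nhds_one {n : ℕ} (hn : 3 ≤ n) :
    ∀ᶠ γ in 𝓝 1, 0 < muP n γ * muM n γ ∧ 0 < Om n γ + muAvg n γ := by
  have h1 : (1 : ℝ) + 1 ≠ 0 := by norm_num
  have hprod : 0 < muP n 1 * muM n 1 := by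
    rw [muP_mul_muM, kap_at_one (by omega), muAvg_at_one]
    have : (3 : ℝ) ≤ n := by exact_mod_cast hn
    nlinarith
  exact (continuousAt_const.eventually_lt (analyticAt_muP_mul_muM n h1).continuousAt hprod).and
    (continuousAt_const.eventually_lt ((continuousAt_Om n h1).add (continuousAt_muAvg n h1))
      (Om_add_muAvg_at_one hn))

theorem continuousAt_gapFactor_one {n : ℕ} (hn : 3 ≤ n) : ContinuousAt (gapFactor n) 1 := by
  have h1 : (1 : ℝ) + 1 ≠ 0 := by norm_num
  have := continuousAt_Om n h1
  have := continuousAt_muAvg n h1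
  have := (Om_add_muAvg_at_one hn).ne'
  unfold gapFactor
  fun_prop (disch := simp_all)

theorem gapFactor_one_ne_zero {n : ℕ} (hn : 3 ≤ n) : gapFactor n 1 ≠ 0 := by
  have := (Om_add_muAvg_at_one hn).ne'
  unfold gapFactor
  norm_num [this]

section LeadingTerms

variable {ι : Type*} {m : ι → ℕ}

-- `none`, `some none`, `some (some t)` index `1`, `Ω_γ − 1/4`, `Ω_{m t} − A_{m t}`; near `γ = 1`
-- each equals `(γ − 1) ^ vanishingOrder m j * leadingFactor m j γ`
def vanishingOrder (m : ι → ℕ) : Option (Option ι) → ℕ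
  | none => 0
  | some none => 2
  | some (some t) => 2 * m t

noncomputable def leadingFactor (m : ι → ℕ) : Option (Option ι) → ℝ → ℝ
  | none => fun _ => 1
  | some none => fun γ => -(γ + 1)⁻¹ ^ 2 / 4
  | some (some t) => gapFactor (m t)

theorem vanishingOrder_injective (hm : Function.Injective m) (h3 : ∀ t, 3 ≤ m t) :
    Function.Injective (vanishingOrder m) := by
  rintro (_ | _ | t) (_ | _ | s) h <;> simp only [vanishingOrder] at h <;> grind [hm.eq_iff]

theorem continuousAt_leadingFactor (h3 : ∀ t, 3 ≤ m t) (j : Option (Option ι)) :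
    ContinuousAt (leadingFactor m j) 1 := by
  rcases j with _ | _ | t
  · exact continuousAt_const
  · show ContinuousAt (fun γ : ℝ => -(γ + 1)⁻¹ ^ 2 / 4) 1
    fun_prop (disch := norm_num)
  · exact continuousAt_gapFactor_one (h3 t)

theorem leadingFactor_ne_zero (h3 : ∀ t, 3 ≤ m t) (j : Option (Option ι)) :
    leadingFactor m j 1 ≠ 0 := by
  rcases j with _ | _ | t
  · exact one_ne_zero
  · norm_num [leadingFactor]
  · exact gapFactor_one_ne_zero (h3 t)

end LeadingTerms

theorem Om_eq_at_one_add {n : ℕ} (hn : n = 1 ∨ 3 ≤ n) {γ : ℝ} (hγ : 0 ≤ γ) :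
    Om n γ = Om n 1 + n * (OmG γ - 1 / 4) + if 3 ≤ n then Om n γ - muAvg n γ else 0 := by
  rcases hn with rfl | hn
  · simp [Om_one hγ, Om_one zero_le_one, OmG_at_one]
  · rw [if_pos hn, Om_at_one (by omega), muAvg]
    ring

theorem sum_mul_Om_eq_expansion {N : ℕ} {n : Fin N → ℕ} (hrange : ∀ i, n i = 1 ∨ 3 ≤ n i)
    (c₀ : ℝ) (c : Fin N → ℝ) {γ : ℝ} (hγ : 0 ≤ γ) :
    c₀ + ∑ i, c i * Om (n i) γ = c₀ + ∑ i, c i * Om (n i) 1 + (∑ i, c i * n i) * (OmG γ - 1 / 4)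
      + ∑ t : {i // 3 ≤ n i}, c t * (Om (n t) γ - muAvg (n t) γ) := by
  classical
  rw [← Finset.sum_subtype (p := fun i => 3 ≤ n i) (Finset.univ.filter fun i => 3 ≤ n i)
    (by simp) fun i => c i * (Om (n i) γ - muAvg (n i) γ), Finset.sum_filter,
    Finset.sum_congr rfl fun i _ => congrArg (c i * ·) (Om_eq_at_one_add (hrange i) hγ)]
  simp only [mul_add, Finset.sum_add_distrib, Finset.sum_mul, mul_ite, mul_zero, mul_assoc]
  ring

theorem eq_zero_of_sum_mul_Om_eventually_eq_zero {N : ℕ} {n : Fin N → ℕ}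
    (hn : Function.Injective n) (hrange : ∀ i, n i = 1 ∨ 3 ≤ n i) {c₀ : ℝ} {c : Fin N → ℝ}
    (H : ∀ᶠ γ in 𝓝 1, c₀ + ∑ i, c i * Om (n i) γ = 0) : c₀ = 0 ∧ c = 0 := by
  classical
  let T := {i // 3 ≤ n i}
  let B := ∑ i, c i * n i
  let C : Option (Option T) → ℝ
    | none => c₀ + ∑ i, c i * Om (n i) 1
    | some none => B
    | some (some t) => c t
  have hT : Function.Injective fun t : T => n t := hn.comp Subtype.val_injective
  have hnear : ∀ᶠ γ in 𝓝 (1 : ℝ), 0 < γ ∧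
      ∀ t : T, 0 < muP (n t) γ * muM (n t) γ ∧ 0 < Om (n t) γ + muAvg (n t) γ :=
    (eventually_gt_nhds one_pos).and (eventually_all.2 fun t => eventually_pos_nhds_one t.2)
  have hexp : ∀ᶠ γ in 𝓝[≠] (1 : ℝ), ∑ j, C j * ((γ - 1) ^ vanishingOrder (fun t : T => n t) j *
        leadingFactor (fun t : T => n t) j γ) = 0 := by
    refine nhdsWithin_le_nhds ?_
    filter_upwards [H, hnear] with γ hγ ⟨hγ0, hγT⟩
    rw [sum_mul_Om_eq_expansion hrange c₀ c hγ0.le, OmG_sub_quarter (by linarith),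
      Finset.sum_congr rfl fun (t : T) _ =>
        congrArg (c t * ·) (Om_sub_muAvg (hγT t).1.le (hγT t).2.ne')] at hγ
    simp only [Fintype.sum_option, C, vanishingOrder, leadingFactor, pow_zero, mul_one]
    linear_combination hγ
  have hC := eq_zero_of_sum_mul_pow_sub_mul_eq_zero (vanishingOrder_injective hT fun t => t.2)
    (continuousAt_leadingFactor fun t => t.2) (leadingFactor_ne_zero fun t => t.2) hexp
  have hc3 : ∀ i, 3 ≤ n i → c i = 0 := fun i h => congrFun hC (some (some ⟨i, h⟩))
  have hc : c = 0 := by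
    funext i
    refine (hrange i).elim (fun h1 => ?_) (hc3 i)
    have hB : B = c i := by
      refine (Finset.sum_eq_single i (fun j _ hji => ?_) (by simp)).trans (by simp [h1])
      rw [hc3 j ((hrange j).resolve_left fun hj => hji (hn (hj.trans h1.symm))), zero_mul]
    exact hB ▸ congrFun hC (some none)
  refine ⟨?_, hc⟩
  simpa [C, hc] using congrFun hC none

theorem analyticOnNhd_sum_mul_Om {N : ℕ} {n : Fin N → ℕ} (hrange : ∀ i, n i = 1 ∨ 3 ≤ n i)
    {γ₂ : ℝ} (hmu : ∀ i, 3 ≤ n i → 0 < muM (n i) γ₂) (c₀ : ℝ) (c : Fin N → ℝ) :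
    AnalyticOnNhd ℝ (fun γ => c₀ + ∑ i, c i * Om (n i) γ) (Ico 1 γ₂) := by
  rintro γ ⟨hγ1, hγ₂⟩
  have hpos : ∀ i, 0 < muP (n i) γ * muM (n i) γ := fun i => by
    rcases hrange i with h1 | h3
    · rw [h1, muP_one_mul_muM_one (by linarith)]
      exact pow_pos (OmG_pos (by linarith)) 2
    · exact muP_mul_muM_pos hγ1
        ((hmu i h3).trans_le (muM_antitoneOn _ hγ1 (hγ1.trans hγ₂.le) hγ₂.le))
  have := fun i => analyticAt_Om (n i) (by linarith : (0 : ℝ) < γ + 1).ne' (hpos i)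
  fun_prop

theorem nondegeneracy
    (N : ℕ)
    (n : Fin N → ℕ) (hmono : StrictMono n) (hrange : ∀ i, n i = 1 ∨ 3 ≤ n i)
    (γ₁ γ₂ : ℝ) (hγ₁ : 1 < γ₁) (hγ₁₂ : γ₁ < γ₂)
    (hmu : ∀ i, 3 ≤ n i → ∀ γ ∈ Set.Icc γ₁ γ₂, 0 < muM (n i) γ) :
    -- (i)
    (∀ c : Fin N → ℝ, c ≠ 0 →
      ∃ γ ∈ Set.Icc γ₁ γ₂, (∑ i, c i * Om (n i) γ) ≠ 0) ∧
    -- (ii)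
    (∀ (c₀ : ℝ) (c : Fin N → ℝ), ¬(c₀ = 0 ∧ c = 0) →
      ∃ γ ∈ Set.Icc γ₁ γ₂, c₀ + ∑ i, c i * Om (n i) γ ≠ 0) := by
  have key : ∀ (c₀ : ℝ) (c : Fin N → ℝ),
      (∀ γ ∈ Icc γ₁ γ₂, c₀ + ∑ i, c i * Om (n i) γ = 0) → c₀ = 0 ∧ c = 0 := fun c₀ c hz =>
    eq_zero_of_sum_mul_Om_eventually_eq_zero hmono.injective hrange
      (eventually_eq_zero_of_eqOn_Icc
        (analyticOnNhd_sum_mul_Om hrange (fun i hi => hmu i hi γ₂ ⟨hγ₁₂.le, le_rfl⟩) c₀ c)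
        hγ₁.le hγ₁₂ fun γ hγ => hz γ hγ)
  refine ⟨fun c hc => ?_, fun c₀ c hc => ?_⟩
  · by_contra! h
    exact hc (key 0 c (by simpa using h)).2
  · by_contra! h
    exact hc (key c₀ c h)
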